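/- Let f : X → ℝ be locally Lipschitzian on a Hausdorff topological vector space. Then for all x, x' ∈ X, the upper endpoint of Lf(x,x') equals the generalized Clarke directional derivative computed with fixed direction: limsup_{y→x, z→x', r→0⁺} (f(y+rz)−f(y))/r = limsup_{y→x, r→0⁺} (f(y+rx')−f(y))/r, and dually for liminf. -/

import Mathlib

open Filter Topology Classical

variable {X : Type*} [AddCommGroup X] [Module ℝ X] [TopologicalSpace X]
  [IsTopologicalAddGroup X] [ContinuousSMul ℝ X] [T2Space X]

/-- The filter of difference quotients `(f (y + r • z) - f y) / r` as `y → x`, `z → x'`,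
`r → 0⁺`. -/
noncomputable def dqF (f : X → ℝ) (x x' : X) : Filter ℝ :=
  Filter.map (fun p : (X × X) × ℝ => (f (p.1.1 + p.2 • p.1.2) - f p.1.1) / p.2)
    (((𝓝 x) ×ˢ (𝓝 x')) ×ˢ (𝓝[>] (0 : ℝ)))

/-- The domain-theoretic directional derivative `Lf(x,x')` as a subset of `ℝ`:
the compact interval `[liminf, limsup]` of the difference quotients when these are
bounded, and the whole real line otherwise. -/
noncomputable def LIntv (f : X → ℝ) (x x' : X) : Set ℝ :=
  if (dqF f x x').IsBounded (· ≤ ·) ∧ (dqF f x x').IsBounded (· ≥ ·) then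
    Set.Icc (Filter.liminf id (dqF f x x')) (Filter.limsup id (dqF f x x'))
  else Set.univ

/-!
If the difference quotients `q(y, w, r) = (f (y + r • w) - f y) / r` are bounded by `C` for `y`
near `x`, `w` in a neighbourhood `W` of `0` and small `r > 0`, then writing a direction `z` near
`x'` as `x' + t • w` with `w ∈ W` gives `q(y, z, r) - q(y, x', r) = t * q(y + r • x', w, r * t)`,
of size at most `t * C`. Since `t > 0` is arbitrary, the quotients in the moving direction differ
from those in the fixed direction by a quantity tending to `0`, which changes neither `limsup` nor
`liminf`. The fixed-direction quotients are bounded because `W` absorbs `x'`.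
-/

lemma Real.limsup_neg {α : Type*} (F : Filter α) (u : α → ℝ) :
    limsup (fun a => -u a) F = -liminf u F := by
  have hset : -{a : ℝ | ∀ᶠ x in F, a ≤ u x} = {a : ℝ | ∀ᶠ x in F, -u x ≤ a} := by
    ext b
    simp only [Set.mem_neg, Set.mem_ofPred_eq, neg_le]
  rw [limsup_eq, liminf_eq, Real.sInf_def, ← hset, neg_neg]

section LimsupComparison

variable {α β : Type*} {F : Filter α} {G : Filter β} {π : α → β} {ι : β → α}
  {g : α → ℝ} {h : β → ℝ}

lemma limsup_le_of_tendsto_sub (hπ : Tendsto π F G)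
    (hgh : Tendsto (fun a => g a - h (π a)) F (𝓝 0))
    (hh : IsBoundedUnder (· ≤ ·) G h) (hg : IsCoboundedUnder (· ≤ ·) F g) :
    limsup g F ≤ limsup h G := by
  refine le_of_forall_pos_le_add fun ε hε => limsup_le_of_le hg ?_
  filter_upwards
    [hπ.eventually (eventually_lt_of_limsup_lt (lt_add_of_pos_right _ (half_pos hε)) hh),
    hgh.eventually (gt_mem_nhds (half_pos hε))] with a h₁ h₂
  linarith

lemma limsup_eq_of_tendsto_sub [G.NeBot] (hπ : Tendsto π F G) (hι : Tendsto ι G F)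
    (hgι : g ∘ ι = h) (hgh : Tendsto (fun a => g a - h (π a)) F (𝓝 0))
    (hh : IsBoundedUnder (· ≤ ·) G fun b => |h b|) :
    limsup g F = limsup h G := by
  have : F.NeBot := hι.neBot
  obtain ⟨hh_le, hh_ge⟩ := isBoundedUnder_le_abs.1 hh
  have hg_ge : IsBoundedUnder (· ≥ ·) F g := by
    obtain ⟨c, hc⟩ := hh_ge
    refine isBoundedUnder_of_eventually_ge (a := c - 1) ?_
    filter_upwards [hπ.eventually (eventually_map.1 hc),
      hgh.eventually (lt_mem_nhds neg_one_lt_zero)] with a h₁ h₂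
    linarith
  have hg_le : IsBoundedUnder (· ≤ ·) F g := by
    obtain ⟨c, hc⟩ := hh_le
    refine isBoundedUnder_of_eventually_le (a := c + 1) ?_
    filter_upwards [hπ.eventually (eventually_map.1 hc),
      hgh.eventually (gt_mem_nhds one_pos)] with a h₁ h₂
    linarith
  refine le_antisymm (limsup_le_of_tendsto_sub hπ hgh hh_le hg_ge.isCoboundedUnder_le) ?_
  subst hgι
  exact hι.limsup_comp_le_limsup hh_ge.isCoboundedUnder_le hg_le

lemma liminf_eq_of_tendsto_sub [G.NeBot] (hπ : Tendsto π F G) (hι : Tendsto ι G F)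
    (hgι : g ∘ ι = h) (hgh : Tendsto (fun a => g a - h (π a)) F (𝓝 0))
    (hh : IsBoundedUnder (· ≤ ·) G fun b => |h b|) :
    liminf g F = liminf h G := by
  have hneg := limsup_eq_of_tendsto_sub (g := fun a => -g a) (h := fun b => -h b) hπ hι
    (by rw [← hgι]; rfl) (by simpa only [neg_zero, neg_sub, neg_sub_neg] using hgh.neg)
    (by simpa only [abs_neg] using hh)
  rwa [Real.limsup_neg, Real.limsup_neg, neg_inj] at hneg

end LimsupComparison

section DiffQuot

variable {E : Type*} [AddCommGroup E] [Module ℝ E]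

noncomputable def diffQuot (f : E → ℝ) (y v : E) (r : ℝ) : ℝ := (f (y + r • v) - f y) / r

lemma diffQuot_smul (f : E → ℝ) (y v : E) (r : ℝ) {t : ℝ} (ht : t ≠ 0) :
    diffQuot f y (t • v) r = t * diffQuot f y v (r * t) := by
  rw [diffQuot, diffQuot, mul_smul, div_mul_eq_div_div, mul_div_cancel₀ _ ht]

lemma diffQuot_add_sub_diffQuot (f : E → ℝ) (y v w : E) (r : ℝ) :
    diffQuot f y (v + w) r - diffQuot f y v r = diffQuot f (y + r • v) w r := by
  rw [diffQuot, diffQuot, diffQuot, div_sub_div_same, smul_add, add_assoc,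
    sub_sub_sub_cancel_right]

variable [TopologicalSpace E] [ContinuousSMul ℝ E]

lemma exists_pos_smul_mem {W : Set E} (hW : W ∈ 𝓝 (0 : E)) (v : E) :
    ∃ t : ℝ, 0 < t ∧ t • v ∈ W := by
  have hv : Tendsto (fun t : ℝ => t • v) (𝓝[>] 0) (𝓝 0) :=
    ((continuous_id.smul continuous_const).tendsto' 0 0 (zero_smul ℝ v)).mono_left
      nhdsWithin_le_nhds
  exact (eventually_mem_nhdsWithin.and (hv.eventually_mem hW)).exists

variable {f : E → ℝ} {x : E} {O W : Set E} {δ C : ℝ}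

lemma isBoundedUnder_abs_diffQuot (hO : O ∈ 𝓝 x) (hW : W ∈ 𝓝 0) (hδ : 0 < δ)
    (hC : ∀ y ∈ O, ∀ w ∈ W, ∀ r ∈ Set.Ioo 0 δ, |diffQuot f y w r| ≤ C) (v : E) :
    IsBoundedUnder (· ≤ ·) (𝓝 x ×ˢ 𝓝[>] 0) fun p => |diffQuot f p.1 v p.2| := by
  obtain ⟨t, ht, htv⟩ := exists_pos_smul_mem hW v
  refine isBoundedUnder_of_eventually_le (a := t⁻¹ * C) ?_
  filter_upwards [tendsto_fst.eventually_mem hO,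
    tendsto_snd.eventually_mem (Ioo_mem_nhdsGT (mul_pos hδ ht))] with p hy hr
  have hr' : p.2 * t⁻¹ ∈ Set.Ioo 0 δ := ⟨mul_pos hr.1 (inv_pos.2 ht), (mul_inv_lt_iff₀ ht).2 hr.2⟩
  have hv : diffQuot f p.1 v p.2 = t⁻¹ * diffQuot f p.1 (t • v) (p.2 * t⁻¹) := by
    rw [← diffQuot_smul _ _ _ _ (inv_ne_zero ht.ne'), inv_smul_smul₀ ht.ne']
  rw [hv, abs_mul, abs_of_pos (inv_pos.2 ht)]
  gcongr
  exact hC _ hy _ htv _ hr'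

lemma tendsto_diffQuot_sub_diffQuot [IsTopologicalAddGroup E] (hO : O ∈ 𝓝 x) (hW : W ∈ 𝓝 0)
    (hδ : 0 < δ)
    (hC : ∀ y ∈ O, ∀ w ∈ W, ∀ r ∈ Set.Ioo 0 δ, |diffQuot f y w r| ≤ C) (v : E) :
    Tendsto (fun p : (E × E) × ℝ => diffQuot f p.1.1 p.1.2 p.2 - diffQuot f p.1.1 v p.2)
      ((𝓝 x ×ˢ 𝓝 v) ×ˢ 𝓝[>] 0) (𝓝 0) := by
  rw [Metric.tendsto_nhds]
  intro ε hε
  set t := ε / (|C| + 1)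
  have ht : 0 < t := by positivity
  have htC : t * C < ε :=
    calc t * C ≤ t * |C| := by gcongr; exact le_abs_self C
      _ < t * (|C| + 1) := by gcongr; linarith
      _ = ε := div_mul_cancel₀ _ (by positivity)
  have hfst : Tendsto (fun p : (E × E) × ℝ => p.1) ((𝓝 x ×ˢ 𝓝 v) ×ˢ 𝓝[>] 0) (𝓝 x ×ˢ 𝓝 v) :=
    tendsto_fst
  have hy : Tendsto (fun p : (E × E) × ℝ => p.1.1 + p.2 • v) ((𝓝 x ×ˢ 𝓝 v) ×ˢ 𝓝[>] 0) (𝓝 x) := by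
    simpa only [Function.comp_apply, zero_smul, add_zero] using
      (tendsto_fst.comp hfst).add ((tendsto_snd.mono_right nhdsWithin_le_nhds).smul_const v)
  have hw : Tendsto (fun p : (E × E) × ℝ => t⁻¹ • (p.1.2 - v)) ((𝓝 x ×ˢ 𝓝 v) ×ˢ 𝓝[>] 0)
      (𝓝 0) := by
    simpa only [Function.comp_apply, sub_self, smul_zero] using
      ((tendsto_snd.comp hfst).sub_const v).const_smul t⁻¹
  filter_upwards [hy.eventually_mem hO, hw.eventually_mem hW,
    tendsto_snd.eventually_mem (Ioo_mem_nhdsGT (div_pos hδ ht))] with p hyO hwW hr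
  have hr' : p.2 * t ∈ Set.Ioo 0 δ := ⟨mul_pos hr.1 ht, (lt_div_iff₀ ht).1 hr.2⟩
  -- the direction `z = p.1.2` is `v` plus `t` times a vector of `W`
  have hz : p.1.2 = v + t • t⁻¹ • (p.1.2 - v) := by rw [smul_inv_smul₀ ht.ne', add_sub_cancel]
  rw [Real.dist_0_eq_abs, hz, diffQuot_add_sub_diffQuot, diffQuot_smul _ _ _ _ ht.ne', abs_mul,
    abs_of_pos ht]
  calc t * |diffQuot f (p.1.1 + p.2 • v) (t⁻¹ • (p.1.2 - v)) (p.2 * t)| ≤ t * C := by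
        gcongr; exact hC _ hyO _ hwW _ hr'
    _ < ε := htC

end DiffQuot

theorem stmt14_general (f : X → ℝ)
    (hLL : ∀ x : X, ∃ (O O' : Set X) (c₁ c₂ δ : ℝ), IsOpen O ∧ x ∈ O ∧ IsOpen O' ∧
      (0 : X) ∈ O' ∧ 0 < δ ∧ ∀ y ∈ O, ∀ z ∈ O', ∀ r : ℝ, 0 < r → r < δ →
        (f (y + r • z) - f y) / r ∈ Set.Icc c₁ c₂) :
    ∀ x x' : X,
      Filter.limsup id (dqF f x x') =
        Filter.limsup (fun p : X × ℝ => (f (p.1 + p.2 • x') - f p.1) / p.2)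
          ((𝓝 x) ×ˢ (𝓝[>] (0 : ℝ))) ∧
      Filter.liminf id (dqF f x x') =
        Filter.liminf (fun p : X × ℝ => (f (p.1 + p.2 • x') - f p.1) / p.2)
          ((𝓝 x) ×ˢ (𝓝[>] (0 : ℝ))) := by
  intro x x'
  obtain ⟨O, W, c₁, c₂, δ, hO, hxO, hW, h0W, hδ, hbound⟩ := hLL x
  have hC : ∀ y ∈ O, ∀ w ∈ W, ∀ r ∈ Set.Ioo 0 δ, |diffQuot f y w r| ≤ max |c₁| |c₂| :=
    fun y hy w hw r hr => abs_le_max_abs_abs (hbound y hy w hw r hr.1 hr.2).1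
      (hbound y hy w hw r hr.1 hr.2).2
  have hπ : Tendsto (fun p : (X × X) × ℝ => (p.1.1, p.2)) ((𝓝 x ×ˢ 𝓝 x') ×ˢ 𝓝[>] 0)
      (𝓝 x ×ˢ 𝓝[>] 0) :=
    (tendsto_fst.comp tendsto_fst).prodMk tendsto_snd
  have hι : Tendsto (fun q : X × ℝ => ((q.1, x'), q.2)) (𝓝 x ×ˢ 𝓝[>] 0)
      ((𝓝 x ×ˢ 𝓝 x') ×ˢ 𝓝[>] 0) :=
    (tendsto_fst.prodMk tendsto_const_nhds).prodMk tendsto_snd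
  have hsub := tendsto_diffQuot_sub_diffQuot (hO.mem_nhds hxO) (hW.mem_nhds h0W) hδ hC x'
  have hbdd := isBoundedUnder_abs_diffQuot (hO.mem_nhds hxO) (hW.mem_nhds h0W) hδ hC x'
  exact ⟨limsup_eq_of_tendsto_sub (π := fun p : (X × X) × ℝ => (p.1.1, p.2)) hπ hι rfl hsub hbdd,
    liminf_eq_of_tendsto_sub (π := fun p : (X × X) × ℝ => (p.1.1, p.2)) hπ hι rfl hsub hbdd⟩

/-- For a locally Lipschitzian `f`, the triple limit superior (and inferior) defining
`Lf(x,x')` coincides with the double limit with the direction `x'` kept fixed: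
`limsup_{y→x,z→x',r→0⁺} (f(y+rz)−f(y))/r = limsup_{y→x,r→0⁺} (f(y+rx')−f(y))/r`,
and dually for `liminf`. -/
theorem stmt14 (f : X → ℝ) (hf : Continuous f)
    (hLL : ∀ x : X, ∃ (O O' : Set X) (c₁ c₂ δ : ℝ), IsOpen O ∧ x ∈ O ∧ IsOpen O' ∧
      (0 : X) ∈ O' ∧ 0 < δ ∧ ∀ y ∈ O, ∀ z ∈ O', ∀ r : ℝ, 0 < r → r < δ →
        (f (y + r • z) - f y) / r ∈ Set.Icc c₁ c₂) :
    ∀ x x' : X,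
      Filter.limsup id (dqF f x x') =
        Filter.limsup (fun p : X × ℝ => (f (p.1 + p.2 • x') - f p.1) / p.2)
          ((𝓝 x) ×ˢ (𝓝[>] (0 : ℝ))) ∧
      Filter.liminf id (dqF f x x') =
        Filter.liminf (fun p : X × ℝ => (f (p.1 + p.2 • x') - f p.1) / p.2)
          ((𝓝 x) ×ˢ (𝓝[>] (0 : ℝ))) :=
  stmt14_general f hLL
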